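/- Let G be a countable amenable group acting by measure-preserving transformations on a probability space (X, μ), with Følner sequence {F_n}. If the amenable measure entropy h(X, μ, G) is zero, then for every finite-entropy measurable partition ξ with cut semimetric ρ_ξ and every ε > 0, one has ℍ_ε(X, μ, G^n_{av} ρ_ξ) = o(|F_n|), where G^n_{av}ρ(x,y) = (1/|F_n|) Σ_{g∈F_n} ρ(gx, gy). -/

import Mathlib

open MeasureTheory Filter Pointwise

section EpsEntropy

variable {α : Type*} [MeasurableSpace α]

/-- `k` works for an `ε`-cover: `X = X₀ ∪ … ∪ X_k` with `μ X₀ < ε` and `diam_ρ X_i < ε` for `i ≥ 1`. -/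
def IsEntCover (μ : Measure α) (ρ : α → α → ℝ) (ε : ℝ) (k : ℕ) : Prop :=
  ∃ A : Fin (k + 1) → Set α, (∀ i, MeasurableSet (A i)) ∧ (⋃ i, A i) = Set.univ ∧
    μ (A 0) < ENNReal.ofReal ε ∧
    ∀ i : Fin (k + 1), i ≠ 0 → ∀ x ∈ A i, ∀ y ∈ A i, ρ x y < ε

/-- The ε-entropy `ℍ_ε(X, μ, ρ) = log₂ k` for the minimal admissible `k`. -/
noncomputable def epsEntropy (μ : Measure α) (ρ : α → α → ℝ) (ε : ℝ) : ℝ :=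
  Real.logb 2 ((sInf {k : ℕ | 0 < k ∧ IsEntCover μ ρ ε k} : ℕ) : ℝ)

/-- A semimetric is admissible iff all of its `ε`-entropies are finite. -/
def Admissible (μ : Measure α) (ρ : α → α → ℝ) : Prop :=
  ∀ ε : ℝ, 0 < ε → ∃ k : ℕ, 0 < k ∧ IsEntCover μ ρ ε k

end EpsEntropy

/-! For a countable partition `T` whose atoms have `ρ`-diameter `< ε`, Markov's inequality shows
that for `t > H(T) / ε` the atoms of measure `< 2 ^ (-t)` cover less than `ε` of the space, while
there are at most `2 ^ t` other atoms; hence `ℍ_ε(ρ) ≤ H(T) / ε`. The average `Gⁿ_av ρ_ξ` vanishes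
on the atoms of `⋁_{g ∈ Fₙ} g⁻¹ξ`, whose entropy is `o(|Fₙ|)` by hypothesis. This refinement has
finite entropy because `I_{Q ∨ R} ≤ I_Q + I_R + μ(Q(x)) μ(R(x)) / (μ((Q ∨ R)(x)) log 2)` and the
last term has integral at most `1 / log 2`. -/

section Atoms

variable {X α β : Type*}

lemma preimage_prodMk_singleton (Q : X → α) (R : X → β) (x : X) :
    (fun y => (Q y, R y)) ⁻¹' {(Q x, R x)} = Q ⁻¹' {Q x} ∩ R ⁻¹' {R x} := by
  ext y; simp

lemma preimage_pi_singleton {ι : Type*} (s : Finset ι) (Q : ι → X → α) (x : X) :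
    (fun y (i : s) => Q i y) ⁻¹' {fun i : s => Q i x} = {y | ∀ i ∈ s, Q i y = Q i x} := by
  ext y; simp [funext_iff]

end Atoms

namespace MeasureTheory

variable {X α β : Type*} [MeasurableSpace X] {μ : Measure X}

/-- The information function of the partition into fibres of `Q`; its integral is the entropy. -/
noncomputable def atomInfo (μ : Measure X) (Q : X → α) (x : X) : ℝ :=
  -Real.logb 2 (μ (Q ⁻¹' {Q x})).toReal

lemma atomInfo_nonneg [IsProbabilityMeasure μ] (Q : X → α) (x : X) : 0 ≤ atomInfo μ Q x :=
  neg_nonneg.2 <| Real.logb_nonpos one_lt_two ENNReal.toReal_nonneg measureReal_le_one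

lemma atomInfo_comp_of_measurePreserving {Y : Type*} [MeasurableSpace Y] {ν : Measure Y}
    [MeasurableSpace α] [MeasurableSingletonClass α] {Q : X → α} (hQ : Measurable Q) {f : Y → X}
    (hf : MeasurePreserving f ν μ) : atomInfo ν (Q ∘ f) = atomInfo μ Q ∘ f := by
  funext x
  simp only [atomInfo, Function.comp_apply, Set.preimage_comp,
    hf.measure_preimage (hQ (measurableSet_singleton _)).nullMeasurableSet]

lemma ae_measure_atom_ne_zero [Countable α] (Q : X → α) :
    ∀ᵐ x ∂μ, μ (Q ⁻¹' {Q x}) ≠ 0 := by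
  rw [ae_iff]
  simp only [ne_eq, not_not]
  have : {x | μ (Q ⁻¹' {Q x}) = 0} = ⋃ a ∈ {a | μ (Q ⁻¹' {a}) = 0}, Q ⁻¹' {a} := by
    ext x; simp
  rw [this, measure_biUnion_null_iff (Set.to_countable _)]
  exact fun _ h => h

lemma atomInfo_prod_le [IsFiniteMeasure μ] {Q : X → α} {R : X → β} {x : X}
    (hx : μ ((fun y => (Q y, R y)) ⁻¹' {(Q x, R x)}) ≠ 0) :
    atomInfo μ (fun y => (Q y, R y)) x ≤ atomInfo μ Q x + atomInfo μ R x +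
      (μ (Q ⁻¹' {Q x}) * μ (R ⁻¹' {R x}) / μ ((fun y => (Q y, R y)) ⁻¹' {(Q x, R x)})).toReal
        / Real.log 2 := by
  have hsub := preimage_prodMk_singleton Q R x
  have hp : 0 < (μ ((fun y => (Q y, R y)) ⁻¹' {(Q x, R x)})).toReal :=
    ENNReal.toReal_pos hx (measure_ne_top _ _)
  have ha : 0 < (μ (Q ⁻¹' {Q x})).toReal :=
    hp.trans_le (measureReal_mono (hsub ▸ Set.inter_subset_left))
  have hb : 0 < (μ (R ⁻¹' {R x})).toReal :=
    hp.trans_le (measureReal_mono (hsub ▸ Set.inter_subset_right))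
  simp only [atomInfo, ENNReal.toReal_div, ENNReal.toReal_mul]
  set a := (μ (Q ⁻¹' {Q x})).toReal
  set b := (μ (R ⁻¹' {R x})).toReal
  set p := (μ ((fun y => (Q y, R y)) ⁻¹' {(Q x, R x)})).toReal
  -- `logb 2 y ≤ y / log 2` turns the correction term into an integrable one
  have hlog : Real.logb 2 (a * b / p) ≤ a * b / p / Real.log 2 :=
    div_le_div_of_nonneg_right (Real.log_le_self (by positivity)) (Real.log_nonneg one_le_two)
  rw [Real.logb_div (by positivity) hp.ne', Real.logb_mul ha.ne' hb.ne'] at hlog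
  linarith

section Countable

variable [MeasurableSpace α] [MeasurableSingletonClass α] [Countable α]

lemma measurable_atomInfo (Q : X → α) (hQ : Measurable Q) : Measurable (atomInfo μ Q) :=
  (measurable_of_countable fun a => -Real.logb 2 (μ (Q ⁻¹' {a})).toReal).comp hQ

lemma lintegral_comp_eq_tsum {Q : X → α} (hQ : Measurable Q) (φ : α → ENNReal) :
    ∫⁻ x, φ (Q x) ∂μ = ∑' a, φ a * μ (Q ⁻¹' {a}) := by
  rw [← lintegral_map (measurable_of_countable φ) hQ, lintegral_countable']
  simp only [Measure.map_apply hQ (measurableSet_singleton _)]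

lemma tsum_measure_preimage_singleton_eq_one [IsProbabilityMeasure μ] {Q : X → α}
    (hQ : Measurable Q) : ∑' a, μ (Q ⁻¹' {a}) = 1 := by
  simpa using (lintegral_comp_eq_tsum (μ := μ) hQ 1).symm

variable [IsProbabilityMeasure μ]

section Prod

variable [MeasurableSpace β] [MeasurableSingletonClass β] [Countable β]

lemma lintegral_measure_atom_ratio_le_one {Q : X → α} {R : X → β} (hQ : Measurable Q)
    (hR : Measurable R) :
    ∫⁻ x, μ (Q ⁻¹' {Q x}) * μ (R ⁻¹' {R x}) / μ ((fun y => (Q y, R y)) ⁻¹' {(Q x, R x)}) ∂μ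
      ≤ 1 := by
  have hS : Measurable fun y => (Q y, R y) := hQ.prodMk hR
  calc ∫⁻ x, μ (Q ⁻¹' {Q x}) * μ (R ⁻¹' {R x}) / μ ((fun y => (Q y, R y)) ⁻¹' {(Q x, R x)}) ∂μ
      = ∑' c : α × β, μ (Q ⁻¹' {c.1}) * μ (R ⁻¹' {c.2}) / μ ((fun y => (Q y, R y)) ⁻¹' {c})
          * μ ((fun y => (Q y, R y)) ⁻¹' {c}) :=
        lintegral_comp_eq_tsum hS fun c =>
          μ (Q ⁻¹' {c.1}) * μ (R ⁻¹' {c.2}) / μ ((fun y => (Q y, R y)) ⁻¹' {c})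
    _ ≤ ∑' c : α × β, μ (Q ⁻¹' {c.1}) * μ (R ⁻¹' {c.2}) :=
        ENNReal.tsum_le_tsum fun _ => (mul_comm _ _).trans_le ENNReal.mul_div_le
    _ = 1 := by
        rw [ENNReal.tsum_prod (f := fun a b => μ (Q ⁻¹' {a}) * μ (R ⁻¹' {b}))]
        simp only [ENNReal.tsum_mul_left, tsum_measure_preimage_singleton_eq_one hR, mul_one,
          tsum_measure_preimage_singleton_eq_one hQ]

lemma integrable_atomInfo_prod {Q : X → α} {R : X → β} (hQ : Measurable Q) (hR : Measurable R)
    (hQi : Integrable (atomInfo μ Q) μ) (hRi : Integrable (atomInfo μ R) μ) :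
    Integrable (atomInfo μ fun x => (Q x, R x)) μ := by
  have hS : Measurable fun y => (Q y, R y) := hQ.prodMk hR
  have hratio : Integrable (fun x => (μ (Q ⁻¹' {Q x}) * μ (R ⁻¹' {R x})
      / μ ((fun y => (Q y, R y)) ⁻¹' {(Q x, R x)})).toReal) μ :=
    integrable_toReal_of_lintegral_ne_top
      ((measurable_of_countable fun c : α × β => μ (Q ⁻¹' {c.1}) * μ (R ⁻¹' {c.2})
        / μ ((fun y => (Q y, R y)) ⁻¹' {c})).comp hS).aemeasurable
      (ne_top_of_le_ne_top ENNReal.one_ne_top (lintegral_measure_atom_ratio_le_one hQ hR))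
  refine ((hQi.add hRi).add (hratio.div_const (Real.log 2))).mono'
    (measurable_atomInfo _ hS).aestronglyMeasurable ?_
  filter_upwards [ae_measure_atom_ne_zero (μ := μ) fun y => (Q y, R y)] with x hx
  rw [Real.norm_of_nonneg (atomInfo_nonneg _ x)]
  exact atomInfo_prod_le hx

end Prod

lemma integrable_atomInfo_pi {ι : Type*} {Q : ι → X → α} (hQ : ∀ i, Measurable (Q i))
    (s : Finset ι) (hQi : ∀ i ∈ s, Integrable (atomInfo μ (Q i)) μ) :
    Integrable (atomInfo μ fun x (i : s) => Q i x) μ := by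
  classical
  induction s using Finset.induction_on with
  | empty =>
    have : atomInfo μ (fun x (i : (∅ : Finset ι)) => Q i x) = 0 := by
      funext x; simp [atomInfo, preimage_pi_singleton]
    rw [this]
    exact integrable_zero _ _ _
  | insert a s _ ih =>
    have : atomInfo μ (fun x (i : (insert a s : Finset ι)) => Q i x)
        = atomInfo μ fun x => (Q a x, fun i : s => Q i x) := by
      funext x
      simp only [atomInfo, preimage_pi_singleton, preimage_prodMk_singleton,
        Finset.forall_mem_insert]
      rfl
    rw [this]
    exact integrable_atomInfo_prod (hQ a) (measurable_pi_lambda _ fun i => hQ i)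
      (hQi a (Finset.mem_insert_self a s))
      (ih fun i hi => hQi i (Finset.mem_insert_of_mem hi))

end Countable

end MeasureTheory

section EpsEntropyBounds

variable {X α : Type*} [MeasurableSpace X] {μ : Measure X} {ρ : X → X → ℝ} {ε : ℝ}

lemma epsEntropy_nonneg : 0 ≤ epsEntropy μ ρ ε :=
  div_nonneg (Real.log_natCast_nonneg _) (Real.log_nonneg one_le_two)

lemma epsEntropy_le_logb {k : ℕ} (hk : 0 < k) (h : IsEntCover μ ρ ε k) :
    epsEntropy μ ρ ε ≤ Real.logb 2 k := by
  have hmin := Nat.sInf_mem (s := {k : ℕ | 0 < k ∧ IsEntCover μ ρ ε k}) ⟨k, hk, h⟩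
  exact Real.logb_le_logb_of_le one_lt_two (Nat.cast_pos.2 hmin.1)
    (Nat.cast_le.2 (Nat.sInf_le ⟨hk, h⟩))

lemma isEntCover_of_finset [MeasurableSpace α] [MeasurableSingletonClass α] [Countable α]
    {T : X → α} (hT : Measurable T) (hρ : ∀ x y, T x = T y → ρ x y < ε) {A₀ : Set X}
    (hA₀ : MeasurableSet A₀) (hμA₀ : μ A₀ < ENNReal.ofReal ε) (s : Finset α)
    (hs : ∀ x ∉ A₀, T x ∈ s) {k : ℕ} (hk : s.card ≤ k) : IsEntCover μ ρ ε k := by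
  obtain ⟨e⟩ : Nonempty (s ↪ Fin k) :=
    Function.Embedding.nonempty_of_card_le (by simpa using hk)
  let B : Fin k → Set X := fun i => T ⁻¹' {a | ∃ h : a ∈ s, e ⟨a, h⟩ = i}
  refine ⟨Fin.cons A₀ B, Fin.cases hA₀ fun i => hT (Set.to_countable _).measurableSet, ?_,
    hμA₀, Fin.cases (fun h => (h rfl).elim) fun i _ x hx y hy => hρ x y ?_⟩
  · refine Set.eq_univ_of_forall fun x => Set.mem_iUnion.2 (Fin.exists_fin_succ.2 ?_)
    by_cases hx : x ∈ A₀
    · exact Or.inl hx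
    · exact Or.inr ⟨e ⟨T x, hs x hx⟩, hs x hx, rfl⟩
  · obtain ⟨hxs, hxi⟩ := hx
    obtain ⟨hys, hyi⟩ := hy
    simpa using e.injective (hxi.trans hyi.symm)

lemma card_mul_le_one_of_le_measure_preimage [IsProbabilityMeasure μ] {T : X → α}
    [MeasurableSpace α] [MeasurableSingletonClass α] (hT : Measurable T) {θ : ENNReal}
    (s : Finset α) (hs : ∀ a ∈ s, θ ≤ μ (T ⁻¹' {a})) : s.card * θ ≤ 1 :=
  calc s.card * θ = ∑ _a ∈ s, θ := by simp
    _ ≤ ∑ a ∈ s, μ (T ⁻¹' {a}) := Finset.sum_le_sum hs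
    _ = μ (T ⁻¹' s) := sum_measure_preimage_singleton s fun a _ => hT (measurableSet_singleton a)
    _ ≤ 1 := prob_le_one

lemma epsEntropy_le_of_measure_small_atoms [IsProbabilityMeasure μ] [MeasurableSpace α]
    [MeasurableSingletonClass α] [Countable α] {T : X → α} (hT : Measurable T)
    (hρ : ∀ x y, T x = T y → ρ x y < ε) {t : ℝ} (ht : 0 ≤ t)
    (hsmall : μ {x | μ (T ⁻¹' {T x}) < ENNReal.ofReal (2 ^ (-t))} < ENNReal.ofReal ε) :
    epsEntropy μ ρ ε ≤ t := by
  have hθ : 0 < ENNReal.ofReal (2 ^ (-t)) := ENNReal.ofReal_pos.2 (by positivity)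
  have hfin : {a | ENNReal.ofReal (2 ^ (-t)) ≤ μ (T ⁻¹' {a})}.Finite :=
    Measure.finite_const_le_meas_of_disjoint_iUnion μ hθ
      (fun a => hT (measurableSet_singleton a)) (pairwise_disjoint_fiber T) (measure_ne_top _ _)
  set s := hfin.toFinset
  have hcard : (s.card : ℝ) ≤ 2 ^ t := by
    have h := card_mul_le_one_of_le_measure_preimage hT s fun a ha => hfin.mem_toFinset.1 ha
    rw [← ENNReal.ofReal_natCast, ← ENNReal.ofReal_mul (Nat.cast_nonneg _),
      ENNReal.ofReal_le_one, Real.rpow_neg zero_le_two, mul_inv_le_iff₀ (by positivity),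
      one_mul] at h
    exact h
  have hcover : IsEntCover μ ρ ε (max s.card 1) :=
    isEntCover_of_finset hT hρ (A₀ := T ⁻¹' {a | μ (T ⁻¹' {a}) < ENNReal.ofReal (2 ^ (-t))})
      (hT (Set.to_countable _).measurableSet) hsmall s
      (fun x hx => hfin.mem_toFinset.2 (Set.mem_ofPred.2 (not_lt.1 hx))) (le_max_left _ _)
  calc epsEntropy μ ρ ε ≤ Real.logb 2 (max s.card 1 : ℕ) :=
        epsEntropy_le_logb (lt_max_of_lt_right one_pos) hcover
    _ ≤ t := by
        rw [Real.logb_le_iff_le_rpow one_lt_two (by positivity)]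
        exact_mod_cast max_le hcard (Real.one_le_rpow one_le_two ht)

theorem epsEntropy_le_integral_atomInfo_div [IsProbabilityMeasure μ] [MeasurableSpace α]
    [MeasurableSingletonClass α] [Countable α] {T : X → α} (hT : Measurable T)
    (hTi : Integrable (atomInfo μ T) μ) (hρ : ∀ x y, T x = T y → ρ x y < ε) (hε : 0 < ε) :
    epsEntropy μ ρ ε ≤ (∫ x, atomInfo μ T x ∂μ) / ε := by
  refine le_of_forall_gt_imp_ge_of_dense fun t ht => ?_
  have hJ : 0 ≤ ∫ x, atomInfo μ T x ∂μ := integral_nonneg (atomInfo_nonneg T)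
  have ht0 : 0 < t := (div_nonneg hJ hε.le).trans_lt ht
  refine epsEntropy_le_of_measure_small_atoms hT hρ ht0.le ?_
  -- an atom of measure `< 2 ^ (-t)` has information `> t`, unless it is null (where `atomInfo = 0`)
  have hsub : {x | μ (T ⁻¹' {T x}) < ENNReal.ofReal (2 ^ (-t))} ≤ᵐ[μ]
      {x | t ≤ atomInfo μ T x} := by
    filter_upwards [ae_measure_atom_ne_zero T] with x hx hlt
    have hpos : 0 < (μ (T ⁻¹' {T x})).toReal := ENNReal.toReal_pos hx (measure_ne_top _ _)
    have hlog := Real.logb_lt_logb one_lt_two hpos (ENNReal.toReal_lt_of_lt_ofReal hlt)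
    rw [Real.logb_rpow two_pos (by norm_num)] at hlog
    exact le_neg.2 hlog.le
  have hmarkov := mul_meas_ge_le_integral_of_nonneg (ae_of_all _ (atomInfo_nonneg T)) hTi t
  rw [div_lt_iff₀ hε] at ht
  calc μ {x | μ (T ⁻¹' {T x}) < ENNReal.ofReal (2 ^ (-t))}
      ≤ μ {x | t ≤ atomInfo μ T x} := measure_mono_ae hsub
    _ = ENNReal.ofReal (μ.real {x | t ≤ atomInfo μ T x}) := (ofReal_measureReal).symm
    _ < ENNReal.ofReal ε := (ENNReal.ofReal_lt_ofReal_iff hε).2 <|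
        lt_of_mul_lt_mul_left (hmarkov.trans_lt (by linarith)) ht0.le

end EpsEntropyBounds

theorem epsEntropy_littleO_of_zero_entropy_general {G X : Type*} [Group G]
    [MeasurableSpace X] [MulAction G X]
    (μ : Measure X) [IsProbabilityMeasure μ]
    (hmp : ∀ g : G, MeasurePreserving (fun x : X => g • x) μ μ)
    (F : ℕ → Finset G)
    -- zero amenable measure entropy:
    (hzero : ∀ Q : X → ℕ, Measurable Q →
      Integrable (fun x => Real.logb 2 (μ (Q ⁻¹' {Q x})).toReal) μ →
      Tendsto (fun n =>
          (-∫ x, Real.logb 2 (μ {y | ∀ g ∈ F n, Q (g • y) = Q (g • x)}).toReal ∂μ)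
            / (F n).card) atTop (nhds 0))
    (P : X → ℕ) (hP : Measurable P)
    (hPent : Integrable (fun x => Real.logb 2 (μ (P ⁻¹' {P x})).toReal) μ)
    (ε : ℝ) (hε : 0 < ε) :
    Tendsto (fun n =>
        epsEntropy μ
          (fun x y => ((F n).card : ℝ)⁻¹ *
            ∑ g ∈ F n, (if P (g • x) = P (g • y) then (0 : ℝ) else 1)) ε
          / (F n).card) atTop (nhds 0) := by
  -- `T n` codes the refined partition `⋁_{g ∈ F n} g⁻¹ξ`
  let T (n : ℕ) (x : X) (g : F n) : ℕ := P (g.1 • x)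
  have hPg (g : G) : Measurable fun x => P (g • x) := hP.comp (hmp g).measurable
  have hinfo (n : ℕ) : ∫ x, atomInfo μ (T n) x ∂μ
      = -∫ x, Real.logb 2 (μ {y | ∀ g ∈ F n, P (g • y) = P (g • x)}).toReal ∂μ := by
    rw [← integral_neg]
    congr 1
    funext x
    rw [atomInfo, preimage_pi_singleton (F n) (fun g x => P (g • x)) x]
  have hTi (n : ℕ) : Integrable (atomInfo μ (T n)) μ := by
    refine integrable_atomInfo_pi hPg (F n) fun g _ => ?_
    rw [show (fun x => P (g • x)) = P ∘ (g • ·) from rfl,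
      atomInfo_comp_of_measurePreserving hP (hmp g)]
    exact ((hmp g).integrable_comp (measurable_atomInfo P hP).aestronglyMeasurable).2 hPent.neg
  have hbound (n : ℕ) : epsEntropy μ (fun x y => ((F n).card : ℝ)⁻¹ *
      ∑ g ∈ F n, (if P (g • x) = P (g • y) then (0 : ℝ) else 1)) ε
        ≤ (∫ x, atomInfo μ (T n) x ∂μ) / ε := by
    refine epsEntropy_le_integral_atomInfo_div (measurable_pi_lambda _ fun g => hPg g) (hTi n)
      (fun x y hxy => ?_) hε
    have hP_eq (g : G) (hg : g ∈ F n) : P (g • x) = P (g • y) := congrFun hxy ⟨g, hg⟩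
    simpa [Finset.sum_ite_of_true hP_eq] using hε
  refine tendsto_of_tendsto_of_tendsto_of_le_of_le tendsto_const_nhds
    (zero_div ε ▸ (hzero P hP hPent).div_const ε)
    (fun n => div_nonneg epsEntropy_nonneg (Nat.cast_nonneg _)) fun n => ?_
  rw [div_right_comm, ← hinfo]
  exact div_le_div_of_nonneg_right (hbound n) (Nat.cast_nonneg _)

/-- Theorem 3(2): if a measure-preserving action of a countable amenable group `G` with Følner
sequence `{Fₙ}` has zero amenable measure entropy (the normalized Shannon entropies of all
refined partitions `⋁_{g∈Fₙ} g⁻¹ξ` tend to `0`), then for every finite-entropy partition `ξ`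
with cut semimetric `ρ_ξ` and every `ε > 0`, `ℍ_ε(X, μ, Gⁿ_av ρ_ξ) = o(|Fₙ|)`. -/
theorem epsEntropy_littleO_of_zero_entropy {G X : Type*} [Group G] [Countable G] [DecidableEq G]
    [MeasurableSpace X] [MulAction G X]
    (μ : Measure X) [IsProbabilityMeasure μ]
    (hmp : ∀ g : G, MeasurePreserving (fun x : X => g • x) μ μ)
    (F : ℕ → Finset G) (hne : ∀ n, (F n).Nonempty)
    (hFolner : ∀ g : G,
      Tendsto (fun n => ((symmDiff (g • F n) (F n)).card : ℝ) / (F n).card) atTop (nhds 0))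
    -- zero amenable measure entropy:
    (hzero : ∀ Q : X → ℕ, Measurable Q →
      Integrable (fun x => Real.logb 2 (μ (Q ⁻¹' {Q x})).toReal) μ →
      Tendsto (fun n =>
          (-∫ x, Real.logb 2 (μ {y | ∀ g ∈ F n, Q (g • y) = Q (g • x)}).toReal ∂μ)
            / (F n).card) atTop (nhds 0))
    (P : X → ℕ) (hP : Measurable P)
    (hPent : Integrable (fun x => Real.logb 2 (μ (P ⁻¹' {P x})).toReal) μ)
    (ε : ℝ) (hε : 0 < ε) :
    Tendsto (fun n =>
        epsEntropy μ
          (fun x y => ((F n).card : ℝ)⁻¹ *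
            ∑ g ∈ F n, (if P (g • x) = P (g • y) then (0 : ℝ) else 1)) ε
          / (F n).card) atTop (nhds 0) :=
  epsEntropy_littleO_of_zero_entropy_general μ hmp F hzero P hP hPent ε hε
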